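/- Let φ be a 1/2-derivation of the solvable Lie algebra L with abelian nilpotent radical of codimension 1. Then there exist a scalar α ∈ ℂ and a finitely supported family (α_i)_{i ≥ 2} of complex numbers such that φ(e_1) = α e_1 + Σ_{i ≥ 2} α_i e_i and φ(e_n) = α e_n for all n ≥ 2. -/

import Mathlib

/-- The underlying space of the solvable Lie algebra with abelian nilpotent
radical of codimension 1, with basis `e i = single i 1` for `i : ℕ+`. -/
abbrev Solv : Type := ℕ+ →₀ ℂ

/-- The bracket on basis elements: `[e 1, e n] = e n` for `n ≥ 2`, all other
brackets of basis elements zero. -/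
noncomputable def solvBasic (i j : ℕ+) : Solv :=
  if i = 1 ∧ 2 ≤ j then Finsupp.single j (1 : ℂ)
  else if j = 1 ∧ 2 ≤ i then -Finsupp.single i (1 : ℂ)
  else 0

/-- The Lie bracket of the solvable Lie algebra, extended bilinearly. -/
noncomputable def solvBracket (f g : Solv) : Solv :=
  f.sum fun p c => g.sum fun q d => (c * d) • solvBasic p q

/-- The basis element `e i` of the solvable Lie algebra. -/
noncomputable def se (i : ℕ+) : Solv := Finsupp.single i 1

/-! `ad (e 1)` is the identity on the radical `span {e n | n ≥ 2}` and kills `e 1`.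
Applying the 1/2-derivation identity to `[e 1, e n] = e n` gives
`2 φ(e n) = α e n + φ(e n) - φ(e n)₁ e 1` with `α = φ(e 1)₁`; the `e 1`-coordinate of this
forces `φ(e n)₁ = 0`, and then `φ(e n) = α e n`. -/

lemma PNat.two_le_iff_ne_one (q : ℕ+) : 2 ≤ q ↔ q ≠ 1 := by
  rw [← PNat.coe_le_coe, Ne, ← PNat.coe_inj, PNat.val_ofNat, PNat.one_coe]
  have := q.pos
  omega

lemma se_apply_self (i : ℕ+) : se i i = 1 :=
  Finsupp.single_eq_same

lemma se_apply_one_of_two_le {n : ℕ+} (hn : 2 ≤ n) : se n 1 = 0 :=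
  Finsupp.single_eq_of_ne' ((PNat.two_le_iff_ne_one n).mp hn)

lemma Finsupp.sum_smul_se (f : Solv) : f.sum (fun i c => c • se i) = f := by
  simp only [se, Finsupp.smul_single', mul_one, Finsupp.sum_single]

lemma solvBasic_of_two_le {n : ℕ+} (hn : 2 ≤ n) (p : ℕ+) :
    solvBasic p n = if p = 1 then se n else 0 := by
  unfold solvBasic se
  rcases eq_or_ne p 1 with rfl | hp
  · simp [hn]
  · simp [hp, (PNat.two_le_iff_ne_one n).mp hn]

lemma solvBasic_one (q : ℕ+) : solvBasic 1 q = se q - if q = 1 then se 1 else 0 := by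
  unfold solvBasic
  rcases eq_or_ne q 1 with rfl | hq
  · simp
  · simp [hq, (PNat.two_le_iff_ne_one q).mpr hq, se]

lemma solvBracket_se_of_two_le (f : Solv) {n : ℕ+} (hn : 2 ≤ n) :
    solvBracket f (se n) = f 1 • se n := by
  calc solvBracket f (se n) = f.sum fun p c => if p = 1 then c • se n else 0 := by
        refine Finsupp.sum_congr fun p _ => ?_
        rw [se, Finsupp.sum_single_index (by simp), mul_one, ← se, solvBasic_of_two_le hn]
        split_ifs <;> simp
    _ = f 1 • se n := by
        rw [Finsupp.sum_ite_eq' f 1 fun _ c => c • se n]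
        split_ifs with h
        · rfl
        · rw [Finsupp.notMem_support_iff.mp h, zero_smul]

lemma se_one_solvBracket (g : Solv) : solvBracket (se 1) g = g - g 1 • se 1 := by
  calc solvBracket (se 1) g
        = g.sum fun q d => d • se q - if q = 1 then d • se 1 else 0 := by
        rw [solvBracket, se, Finsupp.sum_single_index (by simp), ← se]
        refine Finsupp.sum_congr fun q _ => ?_
        rw [one_mul, solvBasic_one, smul_sub, smul_ite, smul_zero]
    _ = g - g 1 • se 1 := by
        rw [Finsupp.sum_sub, Finsupp.sum_smul_se, Finsupp.sum_ite_eq' g 1 fun _ d => d • se 1]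
        split_ifs with h
        · rfl
        · rw [Finsupp.notMem_support_iff.mp h, zero_smul]

def IsHalfDerivation (φ : Solv →ₗ[ℂ] Solv) : Prop :=
  ∀ x y : Solv, φ (solvBracket x y) = (1 / 2 : ℂ) • (solvBracket (φ x) y + solvBracket x (φ y))

lemma IsHalfDerivation.apply_se_of_two_le {φ : Solv →ₗ[ℂ] Solv} (hφ : IsHalfDerivation φ)
    {n : ℕ+} (hn : 2 ≤ n) : φ (se n) = φ (se 1) 1 • se n := by
  have h := hφ (se 1) (se n)
  rw [solvBracket_se_of_two_le _ hn, solvBracket_se_of_two_le _ hn, se_one_solvBracket,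
    se_apply_self, one_smul] at h
  have h_one : φ (se n) 1 = 0 := by
    have := congrArg (· 1) h
    simp only [Finsupp.smul_apply, Finsupp.add_apply, Finsupp.sub_apply, smul_eq_mul,
      se_apply_one_of_two_le hn, se_apply_self] at this
    linear_combination this
  rw [h_one, zero_smul, sub_zero] at h
  linear_combination (norm := module) 2 • h

/-- Every 1/2-derivation `φ` of the solvable Lie algebra with
abelian nilpotent radical of codimension 1 satisfies
`φ (e 1) = α e 1 + Σ_{i≥2} α_i e i` and `φ (e n) = α e n` for all `n ≥ 2`. -/
theorem solvable_half_derivation_formula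
    (φ : Solv →ₗ[ℂ] Solv)
    (hφ : ∀ x y : Solv, φ (solvBracket x y) =
        (1 / 2 : ℂ) • (solvBracket (φ x) y + solvBracket x (φ y))) :
    ∃ (α : ℂ) (αs : ℕ+ →₀ ℂ), αs 1 = 0 ∧
      φ (se 1) = α • se 1 + αs.sum (fun i c => c • se i) ∧
      ∀ n : ℕ+, 2 ≤ n → φ (se n) = α • se n := by
  refine ⟨φ (se 1) 1, (φ (se 1)).erase 1, Finsupp.erase_same, ?_,
    fun n hn => IsHalfDerivation.apply_se_of_two_le hφ hn⟩
  rw [Finsupp.sum_smul_se, se, Finsupp.smul_single', mul_one, Finsupp.single_add_erase]
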